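/- arXiv:1406.7860 — 4 statements merged into one kernel-verified Lean document; each statement's English description precedes it below -/
import Mathlib

section
/- Let n ≥ 1 and let β be a function assigning a rational number to every 0-1 word of length n that satisfies the dual Bayer–Billera relations. Then for all 0-1 words E and F such that EF has length n and F is either empty or begins with the letter 1, one has Σ_{F' ≤ F} β_{EF'} = Σ_{F' ≤ F} β_{E \overline{F'}}, where both sums range over all 0-1 words F' of the same length as F with F' ≤ F. -/
/-!
If `F = 1G`, the words `F' ≤ F` come in pairs `0G', 1G'` with `G' ≤ G`, and complementation
swaps the two members of a pair. Since `(E0)ˇ = E1`, the dual Bayer–Billera relation for the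
prefix `E0` and the suffix `G'` says exactly that each pair contributes the same amount to both sums.
-/

/-- `chk E` is the word `E` with its last letter flipped (`chk [] = []`). -/
def chk : List Bool → List Bool
  | [] => []
  | [b] => [!b]
  | b :: c :: rest => b :: chk (c :: rest)

/-- `comp E` is the complementary word, with every letter flipped. -/
def comp (E : List Bool) : List Bool := E.map (!·)

/-- `Eij i j` is the word `0^(i-1) 1 0^(j-i)`. -/
def Eij (i j : ℕ) : List Bool :=
  List.replicate (i - 1) false ++ [true] ++ List.replicate (j - i) false

/-- The word `0^j`. -/
def zeros (j : ℕ) : List Bool := List.replicate j false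

/-- The word `1^j`. -/
def ones (j : ℕ) : List Bool := List.replicate j true

/-- `β` satisfies the dual Bayer–Billera relations (for words of length `n`). -/
def DualBB (n : ℕ) (β : List Bool → ℚ) : Prop :=
  ∀ E F : List Bool, E.length + F.length = n →
    β (E ++ F) + β (chk E ++ F) = β (E ++ comp F) + β (chk E ++ comp F)

/-- `α` satisfies the Bayer–Billera relations (for words of length `n`). -/
def BB (n : ℕ) (α : List Bool → ℚ) : Prop :=
  ∀ (j : ℕ) (E F : List Bool), 1 ≤ j →
    (E = [] ∨ E.getLast? = some true) →
    (F = [] ∨ F.head? = some true) →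
    E.length + j + F.length = n →
    ∑ i ∈ Finset.Icc 1 j, (-1 : ℚ) ^ (i - 1) * α (E ++ Eij i j ++ F) =
      2 * (if Odd j then 1 else 0) * α (E ++ zeros j ++ F)

/-- The finset of all 0-1 words of length `n`. -/
def allWords : ℕ → Finset (List Bool)
  | 0 => {[]}
  | n + 1 => (allWords n).image (List.cons false) ∪ (allWords n).image (List.cons true)

/-- Pointwise order on words of equal length (`wleB E F = true` iff `E ≤ F`). -/
def wleB : List Bool → List Bool → Bool
  | [], [] => true
  | a :: E, b :: F => (!a || b) && wleB E F
  | _, _ => false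

lemma length_eq_of_wleB : ∀ A B : List Bool, wleB A B = true → A.length = B.length
  | [], [], _ => rfl
  | a :: A, b :: B, h => by
    simp only [wleB, Bool.and_eq_true] at h
    simp [length_eq_of_wleB A B h.2]
  | [], _ :: _, h => by simp [wleB] at h
  | _ :: _, [], h => by simp [wleB] at h

lemma chk_append_singleton : ∀ (E : List Bool) (b : Bool), chk (E ++ [b]) = E ++ [!b]
  | [], _ => rfl
  | [_], _ => rfl
  | a :: c :: rest, b => by
    have ih := chk_append_singleton (c :: rest) b
    simp only [List.cons_append, chk] at ih ⊢
    rw [ih]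

lemma sum_filter_wleB_true_cons {M : Type*} [AddCommMonoid M] (G : List Bool)
    (g : List Bool → M) :
    ∑ F' ∈ (allWords (G.length + 1)).filter (fun F' => wleB F' (true :: G)), g F' =
      ∑ G' ∈ (allWords G.length).filter (fun G' => wleB G' G),
        (g (false :: G') + g (true :: G')) := by
  rw [allWords, Finset.filter_union, Finset.sum_union, Finset.filter_image, Finset.filter_image,
    Finset.sum_image (fun _ _ _ _ h => List.cons_injective h),
    Finset.sum_image (fun _ _ _ _ h => List.cons_injective h)]
  · simp only [wleB, Bool.not_false, Bool.not_true, Bool.true_or, Bool.false_or, Bool.true_and,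
      Finset.sum_add_distrib]
  · simp only [Finset.disjoint_left, Finset.mem_filter, Finset.mem_image]
    rintro _ ⟨⟨_, _, rfl⟩, _⟩ ⟨⟨_, _, h⟩, _⟩
    simp at h

lemma DualBB.add_append_cons_eq {n : ℕ} {β : List Bool → ℚ} (hβ : DualBB n β)
    {E G : List Bool} (hlen : E.length + 1 + G.length = n) :
    β (E ++ false :: G) + β (E ++ true :: G) =
      β (E ++ false :: comp G) + β (E ++ true :: comp G) := by
  have hrel := hβ (E ++ [false]) G (by simpa using hlen)
  rw [chk_append_singleton] at hrel
  simpa using hrel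

theorem dualBB_sum_complement_general (n : ℕ) (β : List Bool → ℚ)
    (hβ : DualBB n β) (E F : List Bool) (hlen : E.length + F.length = n)
    (hF : F = [] ∨ F.head? = some true) :
    ∑ F' ∈ (allWords F.length).filter (fun F' => wleB F' F), β (E ++ F') =
      ∑ F' ∈ (allWords F.length).filter (fun F' => wleB F' F), β (E ++ comp F') := by
  obtain rfl | ⟨G, rfl⟩ : F = [] ∨ ∃ G, F = true :: G := by
    rcases F with _ | ⟨b, G⟩ <;> simp_all
  · simp [allWords, Finset.filter_singleton, wleB, comp]
  · rw [List.length_cons, sum_filter_wleB_true_cons, sum_filter_wleB_true_cons]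
    refine Finset.sum_congr rfl fun G' hG' => ?_
    have hG'len := length_eq_of_wleB _ _ (Finset.mem_filter.mp hG').2
    rw [hβ.add_append_cons_eq (by simp at hlen; omega), add_comm]
    simp [comp]

theorem dualBB_sum_complement (n : ℕ) (hn : 1 ≤ n) (β : List Bool → ℚ)
    (hβ : DualBB n β) (E F : List Bool) (hlen : E.length + F.length = n)
    (hF : F = [] ∨ F.head? = some true) :
    ∑ F' ∈ (allWords F.length).filter (fun F' => wleB F' F), β (E ++ F') =
      ∑ F' ∈ (allWords F.length).filter (fun F' => wleB F' F), β (E ++ comp F') :=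
  dualBB_sum_complement_general n β hβ E F hlen hF
end

section
/- Let n ≥ 1, let β be a function assigning a rational number to every 0-1 word of length n, and let P = Σ_{E} β_E μ_E ∈ A, the sum over all 0-1 words E of length n, where μ_E = μ_{E_1}⋯μ_{E_n} with μ_0 = a and μ_1 = b. Then P belongs to the unital ℚ-subalgebra of A generated by a + b and ab + ba if and only if β satisfies the dual Bayer–Billera relations. -/
/-- The free associative `ℚ`-algebra on the two noncommuting generators `a`, `b`. -/
abbrev FreeA := FreeAlgebra ℚ Bool

/-- The generator `a`. -/
noncomputable def gena : FreeA := FreeAlgebra.ι ℚ false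

/-- The generator `b`. -/
noncomputable def genb : FreeA := FreeAlgebra.ι ℚ true

/-- The monomial `μ_E = μ_{E_1} ⋯ μ_{E_n}`, where `μ_0 = a` and `μ_1 = b`. -/
noncomputable def mu (E : List Bool) : FreeA :=
  (E.map (fun e => FreeAlgebra.ι ℚ e)).prod


/-!
The endomorphism `φ : a ↦ a + b, b ↦ a - b` of `A` is injective and sends `a + b` to `2a` and
`ab + ba` to `2(a² - b²)`, so `P` lies in the subalgebra generated by `a + b` and `ab + ba` iff
`φ P` lies in the subalgebra generated by `a` and `b²`, i.e. iff no monomial of `φ P` has a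
maximal block of `b`s (letters `true`) of odd length. Moreover `φ P = ∑_w β̂_w μ_w`, where `β̂` is
the Walsh–Fourier transform of `β` on `(ℤ/2)ⁿ`. Splitting words after position `k`, both
`EF ↦ ĚF` and `EF ↦ EF̄` are translations of `(ℤ/2)ⁿ`, so the transform of the dual
Bayer–Billera relation at `k` is `β̂_w` times a factor that is nonzero exactly when `k = 0` or
`w_k = a`, and `w` has an odd number of `b`s after position `k`. Such a `k` exists iff `w` has a
block of `b`s of odd length: take `k` just before the last one.
-/

open Finset

inductive EvenRuns : List Bool → Prop
  | nil : EvenRuns []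
  | cons_false {w : List Bool} : EvenRuns w → EvenRuns (false :: w)
  | cons_true_true {w : List Bool} : EvenRuns w → EvenRuns (true :: true :: w)

namespace EvenRuns

theorem append {u v : List Bool} (hu : EvenRuns u) (hv : EvenRuns v) : EvenRuns (u ++ v) := by
  induction hu with
  | nil => exact hv
  | cons_false _ ih => exact cons_false ih
  | cons_true_true _ ih => exact cons_true_true ih

theorem even_count {w : List Bool} (h : EvenRuns w) : Even (w.count true) := by
  induction h with
  | nil => simp
  | cons_false _ ih => simpa using ih
  | cons_true_true _ ih => simpa [List.count_cons, Nat.even_add_one] using ih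

theorem of_append {u v : List Bool} (h : EvenRuns (u ++ v)) (hu : u.getLastD false = false) :
    EvenRuns v := by
  generalize hw : u ++ v = w at h
  induction h generalizing u with
  | nil =>
    obtain ⟨-, rfl⟩ := List.append_eq_nil_iff.mp hw
    exact nil
  | cons_false h ih =>
    rcases List.cons_eq_append_iff.mp hw.symm with ⟨rfl, rfl⟩ | ⟨u, rfl, rfl⟩
    · exact cons_false h
    · exact ih (by simpa only [List.getLastD_cons] using hu) rfl
  | cons_true_true h ih =>
    rcases List.cons_eq_append_iff.mp hw.symm with ⟨rfl, rfl⟩ | ⟨u, rfl, hw'⟩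
    · exact cons_true_true h
    rcases List.cons_eq_append_iff.mp hw' with ⟨rfl, rfl⟩ | ⟨u, rfl, rfl⟩
    · simp at hu
    · refine ih ?_ rfl
      rcases List.eq_nil_or_concat u with rfl | ⟨l, a, rfl⟩
      · simp at hu
      · simpa only [List.getLastD_cons, List.concat_eq_append, List.getLastD_concat] using hu

theorem of_forall_even_count : ∀ w : List Bool,
    (∀ u v, w = u ++ v → u.getLastD false = false → Even (v.count true)) → EvenRuns w
  | [], _ => nil
  | false :: l, h => cons_false <| of_forall_even_count l fun u v hl hu =>
      h (false :: u) v (by simp [hl]) (by simpa only [List.getLastD_cons] using hu)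
  | [true], h => absurd (h [] [true] rfl rfl) (by decide)
  | true :: false :: l, h => by
    have h₁ := h [] _ rfl rfl
    have h₂ := h [true, false] l rfl rfl
    simp [Nat.even_add_one] at h₁
    exact (Nat.not_even_iff_odd.mpr h₁ h₂).elim
  | true :: true :: l, h => cons_true_true <| of_forall_even_count l fun u v hl hu => by
    cases u with
    | nil => simpa [hl, List.count_cons, Nat.even_add_one] using h [] _ rfl rfl
    | cons x u =>
      refine h (true :: true :: x :: u) v (by simp [hl]) ?_
      simpa only [List.getLastD_cons] using hu

end EvenRuns

theorem evenRuns_iff_forall_take_drop {w : List Bool} :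
    EvenRuns w ↔ ∀ k ≤ w.length, (w.take k).getLastD false = false →
      Even ((w.drop k).count true) := by
  constructor
  · intro h k _ hk
    exact (EvenRuns.of_append (by rwa [List.take_append_drop]) hk).even_count
  · refine fun h => EvenRuns.of_forall_even_count w fun u v hw hu => ?_
    subst hw
    simpa [List.take_left', List.drop_left'] using h u.length (by simp) (by simpa using hu)

theorem chk_length (E : List Bool) : (chk E).length = E.length := by
  induction E using chk.induct with
  | case1 | case2 => rfl
  | case3 b c rest ih => simpa [chk] using ih

theorem zipWith_xor_zipWith_xor_cancel : ∀ {G m : List Bool}, G.length = m.length →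
    List.zipWith xor (List.zipWith xor G m) m = G
  | [], _, _ => rfl
  | _ :: _, [], h => by simp at h
  | _ :: G, _ :: m, h => by
    simp [zipWith_xor_zipWith_xor_cancel (G := G) (m := m) (by simpa using h)]

theorem zipWith_xor_zeros (F : List Bool) : List.zipWith xor F (zeros F.length) = F := by
  induction F <;> simp_all [zeros, List.replicate_succ]

theorem zipWith_xor_ones (F : List Bool) : List.zipWith xor F (ones F.length) = comp F := by
  induction F <;> simp_all [ones, comp, List.replicate_succ]

theorem zipWith_xor_chk_zeros (E : List Bool) :
    List.zipWith xor E (chk (zeros E.length)) = chk E := by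
  induction E using chk.induct with
  | case1 => rfl
  | case2 b => simp [zeros, chk]
  | case3 b c rest ih =>
    simpa [zeros, List.replicate_succ, chk] using ih

theorem mem_allWords {n : ℕ} {E : List Bool} : E ∈ allWords n ↔ E.length = n := by
  induction n generalizing E with
  | zero => simp [allWords]
  | succ n ih => cases E with
    | nil => simp [allWords]
    | cons x E => cases x <;> simp [allWords, ih]

theorem sum_allWords_succ {M : Type*} [AddCommMonoid M] (n : ℕ) (f : List Bool → M) :
    ∑ w ∈ allWords (n + 1), f w =
      ∑ w ∈ allWords n, f (false :: w) + ∑ w ∈ allWords n, f (true :: w) := by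
  rw [allWords, sum_union, sum_image, sum_image] <;> simp [disjoint_left]

theorem sum_allWords_comp_zipWith_xor {M : Type*} [AddCommMonoid M] {n : ℕ} {m : List Bool}
    (hm : m.length = n) (f : List Bool → M) :
    ∑ G ∈ allWords n, f (List.zipWith xor G m) = ∑ G ∈ allWords n, f G := by
  have hmaps : ∀ G ∈ allWords n, List.zipWith xor G m ∈ allWords n := fun G hG => by
    simp [mem_allWords, mem_allWords.mp hG, hm]
  have hinv : ∀ G ∈ allWords n, List.zipWith xor (List.zipWith xor G m) m = G := fun G hG =>
    zipWith_xor_zipWith_xor_cancel ((mem_allWords.mp hG).trans hm.symm)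
  exact sum_nbij' _ _ hmaps hmaps hinv hinv fun _ _ => rfl

def walshChar (w E : List Bool) : ℚ := (-1) ^ (List.zipWith (· && ·) w E).count true

@[simp]
theorem walshChar_nil_left (E : List Bool) : walshChar [] E = 1 := by simp [walshChar]

theorem walshChar_cons (x y : Bool) (w E : List Bool) :
    walshChar (x :: w) (y :: E) = (if x && y then -1 else 1) * walshChar w E := by
  cases h : x && y <;> simp [walshChar, h, pow_succ, mul_comm]

theorem walshChar_append {w₁ E : List Bool} (h : w₁.length = E.length) (w₂ F : List Bool) :
    walshChar (w₁ ++ w₂) (E ++ F) = walshChar w₁ E * walshChar w₂ F := by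
  simp [walshChar, List.zipWith_append h, pow_add]

theorem walshChar_zipWith_xor : ∀ {w E m : List Bool}, E.length = m.length →
    walshChar w (List.zipWith xor E m) = walshChar w E * walshChar w m
  | [], _, _, _ => by simp
  | _ :: _, [], [], _ => by simp [walshChar]
  | _ :: _, [], _ :: _, h | _ :: _, _ :: _, [], h => by simp at h
  | x :: w, e :: E, y :: m, h => by
    simp only [List.zipWith_cons_cons, walshChar_cons,
      walshChar_zipWith_xor (w := w) (by simpa using h)]
    cases x <;> cases e <;> cases y <;> simp

theorem walshChar_zeros (w : List Bool) (k : ℕ) : walshChar w (zeros k) = 1 := by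
  induction w generalizing k with
  | nil => simp
  | cons x w ih => cases k with
    | zero => simp [zeros, walshChar]
    | succ k =>
      rw [show zeros (k + 1) = false :: zeros k from rfl, walshChar_cons]
      simpa using ih k

theorem walshChar_ones (w : List Bool) : walshChar w (ones w.length) = (-1) ^ w.count true := by
  induction w with
  | nil => simp
  | cons x w ih =>
    cases x <;> simp [ones, List.replicate_succ, walshChar_cons, pow_succ, ← ih]

theorem walshChar_chk_zeros (u : List Bool) :
    walshChar u (chk (zeros u.length)) = if u.getLastD false then -1 else 1 := by
  induction u using chk.induct with
  | case1 => simp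
  | case2 x => cases x <;> simp [chk, zeros, walshChar_cons]
  | case3 x y u ih =>
    simpa [zeros, List.replicate_succ, chk, walshChar_cons, List.getLastD_cons] using ih

theorem sum_walshChar_mul_walshChar {n : ℕ} {G E : List Bool} (hG : G.length = n)
    (hE : E.length = n) :
    ∑ w ∈ allWords n, walshChar w G * walshChar w E = if G = E then 2 ^ n else 0 := by
  induction n generalizing G E with
  | zero => simp_all [allWords]
  | succ n ih =>
    obtain ⟨g, G, rfl⟩ := List.exists_cons_of_length_eq_add_one hG
    obtain ⟨e, E, rfl⟩ := List.exists_cons_of_length_eq_add_one hE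
    simp only [sum_allWords_succ, walshChar_cons, Bool.false_and, Bool.true_and]
    simp_rw [mul_mul_mul_comm _ (walshChar _ G), ← mul_sum,
      ih (by simpa using hG) (by simpa using hE)]
    by_cases hGE : G = E <;> cases g <;> cases e <;> simp [hGE, pow_succ] <;> ring

def walsh (n : ℕ) (β : List Bool → ℚ) (w : List Bool) : ℚ :=
  ∑ E ∈ allWords n, walshChar w E * β E

theorem walsh_comp_zipWith_xor {n : ℕ} {m : List Bool} (hm : m.length = n)
    (β : List Bool → ℚ) (w : List Bool) :
    walsh n (fun G => β (List.zipWith xor G m)) w = walshChar w m * walsh n β w := by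
  calc walsh n (fun G => β (List.zipWith xor G m)) w
      = ∑ E ∈ allWords n, walshChar w (List.zipWith xor (List.zipWith xor E m) m) *
          β (List.zipWith xor E m) :=
        sum_congr rfl fun E hE => by
          rw [zipWith_xor_zipWith_xor_cancel ((mem_allWords.mp hE).trans hm.symm)]
    _ = ∑ E ∈ allWords n, walshChar w (List.zipWith xor E m) * β E :=
        sum_allWords_comp_zipWith_xor hm fun E => walshChar w (List.zipWith xor E m) * β E
    _ = walshChar w m * walsh n β w := by
        rw [walsh, mul_sum]
        refine sum_congr rfl fun E hE => ?_
        rw [walshChar_zipWith_xor ((mem_allWords.mp hE).trans hm.symm)]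
        ring

theorem sum_walshChar_mul_walsh {n : ℕ} {G : List Bool} (hG : G.length = n)
    (β : List Bool → ℚ) :
    ∑ w ∈ allWords n, walshChar w G * walsh n β w = 2 ^ n * β G := by
  simp_rw [walsh, mul_sum, ← mul_assoc]
  rw [sum_comm]
  simp_rw [← sum_mul]
  rw [sum_congr rfl fun E hE => by rw [sum_walshChar_mul_walshChar hG (mem_allWords.mp hE)]]
  simp [mem_allWords.mpr hG]

theorem forall_walsh_eq_zero_iff {n : ℕ} {γ : List Bool → ℚ} :
    (∀ w ∈ allWords n, walsh n γ w = 0) ↔ ∀ G ∈ allWords n, γ G = 0 := by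
  refine ⟨fun h G hG => ?_, fun h w _ => sum_eq_zero fun E hE => by rw [h E hE, mul_zero]⟩
  have := sum_walshChar_mul_walsh (mem_allWords.mp hG) γ
  rw [sum_eq_zero fun w hw => by rw [h w hw, mul_zero]] at this
  exact (mul_eq_zero.mp this.symm).resolve_left (by positivity)

def xorDefect (m₁ m₂ : List Bool) (β : List Bool → ℚ) (G : List Bool) : ℚ :=
  β G + β (List.zipWith xor G m₁) - β (List.zipWith xor G m₂) -
    β (List.zipWith xor (List.zipWith xor G m₂) m₁)

theorem walsh_xorDefect {n : ℕ} {m₁ m₂ : List Bool} (h₁ : m₁.length = n) (h₂ : m₂.length = n)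
    (β : List Bool → ℚ) (w : List Bool) :
    walsh n (xorDefect m₁ m₂ β) w =
      (1 + walshChar w m₁) * (1 - walshChar w m₂) * walsh n β w := by
  have e₁ := walsh_comp_zipWith_xor h₁ β w
  have e₂ := walsh_comp_zipWith_xor h₂ β w
  have e₁₂ := walsh_comp_zipWith_xor h₂ (fun G => β (List.zipWith xor G m₁)) w
  rw [e₁] at e₁₂
  simp only [walsh, xorDefect, mul_add, mul_sub, sum_add_distrib, sum_sub_distrib] at e₁ e₂ e₁₂ ⊢
  rw [e₁, e₂, e₁₂]
  ring

def flipMask (k n : ℕ) : List Bool := chk (zeros k) ++ zeros (n - k)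

def compMask (k n : ℕ) : List Bool := zeros k ++ ones (n - k)

theorem flipMask_length {k n : ℕ} (hk : k ≤ n) : (flipMask k n).length = n := by
  simp [flipMask, chk_length, zeros]; omega

theorem compMask_length {k n : ℕ} (hk : k ≤ n) : (compMask k n).length = n := by
  simp [compMask, zeros, ones]; omega

theorem append_zipWith_xor_flipMask {E F : List Bool} {k n : ℕ} (hk : E.length = k)
    (hn : E.length + F.length = n) : List.zipWith xor (E ++ F) (flipMask k n) = chk E ++ F := by
  subst hk hn
  rw [flipMask, Nat.add_sub_cancel_left, List.zipWith_append (by simp [chk_length, zeros]),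
    zipWith_xor_chk_zeros, zipWith_xor_zeros]

theorem append_zipWith_xor_compMask {E F : List Bool} {k n : ℕ} (hk : E.length = k)
    (hn : E.length + F.length = n) : List.zipWith xor (E ++ F) (compMask k n) = E ++ comp F := by
  subst hk hn
  rw [compMask, Nat.add_sub_cancel_left, List.zipWith_append (by simp [zeros]),
    zipWith_xor_zeros, zipWith_xor_ones]

theorem walshChar_flipMask {k n : ℕ} {w : List Bool} (hw : w.length = n) (hk : k ≤ n) :
    walshChar w (flipMask k n) = if (w.take k).getLastD false then -1 else 1 := by
  conv_lhs => rw [← List.take_append_drop k w]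
  have : (w.take k).length = k := by simp; omega
  rw [flipMask, walshChar_append (by simp [this, chk_length, zeros]), walshChar_zeros, mul_one,
    ← walshChar_chk_zeros, this]

theorem walshChar_compMask {k n : ℕ} {w : List Bool} (hw : w.length = n) (hk : k ≤ n) :
    walshChar w (compMask k n) = (-1) ^ (w.drop k).count true := by
  conv_lhs => rw [← List.take_append_drop k w]
  have : (w.drop k).length = n - k := by simp [hw]
  rw [compMask, walshChar_append (by simp [zeros]; omega), walshChar_zeros, one_mul,
    ← this, walshChar_ones]

theorem dualBB_iff_forall_xorDefect {n : ℕ} {β : List Bool → ℚ} :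
    DualBB n β ↔ ∀ k ≤ n, ∀ G ∈ allWords n, xorDefect (flipMask k n) (compMask k n) β G = 0 := by
  constructor
  · intro h k hk G hG
    obtain ⟨E, F, rfl, hE, hEF⟩ : ∃ E F, G = E ++ F ∧ E.length = k ∧ E.length + F.length = n :=
      ⟨G.take k, G.drop k, (G.take_append_drop k).symm, by simp [mem_allWords.mp hG, hk],
        by simp [mem_allWords.mp hG, hk]⟩
    have hEF' : E.length + (comp F).length = n := by simpa [comp] using hEF
    rw [xorDefect, append_zipWith_xor_flipMask hE hEF, append_zipWith_xor_compMask hE hEF,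
      append_zipWith_xor_flipMask hE hEF', h E F hEF]
    ring
  · intro h E F hEF
    have hEF' : E.length + (comp F).length = n := by simpa [comp] using hEF
    have := h E.length (by omega) (E ++ F) (mem_allWords.mpr (by simp [hEF]))
    rw [xorDefect, append_zipWith_xor_flipMask rfl hEF, append_zipWith_xor_compMask rfl hEF,
      append_zipWith_xor_flipMask rfl hEF'] at this
    linarith

theorem one_add_ite_mul_one_sub_neg_one_pow (b : Bool) (c : ℕ) :
    (1 + if b then -1 else 1 : ℚ) * (1 - (-1) ^ c) = if b = false ∧ Odd c then 4 else 0 := by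
  rcases Nat.even_or_odd c with h | h <;> cases b <;>
    norm_num [h, h.neg_one_pow, Nat.not_odd_iff_even.mpr]

theorem walsh_xorDefect_flipMask_compMask {n k : ℕ} (hk : k ≤ n) (β : List Bool → ℚ)
    {w : List Bool} (hw : w.length = n) :
    walsh n (xorDefect (flipMask k n) (compMask k n) β) w =
      (if (w.take k).getLastD false = false ∧ Odd ((w.drop k).count true) then 4 else 0) *
        walsh n β w := by
  rw [walsh_xorDefect (flipMask_length hk) (compMask_length hk), walshChar_flipMask hw hk,
    walshChar_compMask hw hk, one_add_ite_mul_one_sub_neg_one_pow]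

theorem dualBB_iff_walsh {n : ℕ} {β : List Bool → ℚ} :
    DualBB n β ↔ ∀ w ∈ allWords n, ¬EvenRuns w → walsh n β w = 0 := by
  rw [dualBB_iff_forall_xorDefect]
  constructor
  · intro h w hw hbad
    obtain ⟨k, hk, hsplit⟩ : ∃ k ≤ n,
        (w.take k).getLastD false = false ∧ Odd ((w.drop k).count true) := by
      simpa [evenRuns_iff_forall_take_drop, mem_allWords.mp hw, Nat.not_even_iff_odd] using hbad
    have := forall_walsh_eq_zero_iff.mpr (h k hk) w hw
    rw [walsh_xorDefect_flipMask_compMask hk β (mem_allWords.mp hw), if_pos hsplit] at this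
    simpa using this
  · intro h k hk
    refine forall_walsh_eq_zero_iff.mp fun w hw => ?_
    rw [walsh_xorDefect_flipMask_compMask hk β (mem_allWords.mp hw)]
    split_ifs with hsplit
    · rw [h w hw fun hgood => ?_, mul_zero]
      exact Nat.not_even_iff_odd.mpr hsplit.2 <| evenRuns_iff_forall_take_drop.mp hgood k
        (by rw [mem_allWords.mp hw]; exact hk) hsplit.1
    · rw [zero_mul]

theorem mu_cons (x : Bool) (E : List Bool) : mu (x :: E) = FreeAlgebra.ι ℚ x * mu E := by
  simp [mu]

theorem mu_append (E F : List Bool) : mu (E ++ F) = mu E * mu F := by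
  simp [mu]

theorem mu_eq_basisFreeMonoid (w : List Bool) :
    mu w = FreeAlgebra.basisFreeMonoid ℚ Bool (FreeMonoid.ofList w) := by
  simp [mu, FreeAlgebra.basisFreeMonoid, FreeAlgebra.equivMonoidAlgebraFreeMonoid]

theorem basisFreeMonoid_repr_mu (v w : List Bool) :
    (FreeAlgebra.basisFreeMonoid ℚ Bool).repr (mu v) (FreeMonoid.ofList w) =
      if v = w then 1 else 0 := by
  rw [mu_eq_basisFreeMonoid, Module.Basis.repr_self]
  split_ifs with h
  · rw [h, Finsupp.single_eq_same]
  · exact Finsupp.single_eq_of_ne (FreeMonoid.ofList.injective.ne h).symm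

theorem mu_mem_adjoin_of_evenRuns {w : List Bool} (h : EvenRuns w) :
    mu w ∈ Algebra.adjoin ℚ {gena, genb * genb} := by
  induction h with
  | nil => exact one_mem _
  | cons_false _ ih =>
    rw [mu_cons]
    exact mul_mem (Algebra.subset_adjoin (by simp [gena])) ih
  | cons_true_true _ ih =>
    rw [mu_cons, mu_cons, ← mul_assoc]
    exact mul_mem (Algebra.subset_adjoin (by simp [genb])) ih

theorem exists_evenRuns_of_mem_closure {x : FreeA}
    (hx : x ∈ Submonoid.closure {gena, genb * genb}) : ∃ w, EvenRuns w ∧ mu w = x := by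
  induction hx using Submonoid.closure_induction with
  | mem y hy =>
    rcases hy with rfl | rfl
    · exact ⟨[false], .cons_false .nil, by simp [mu, gena]⟩
    · exact ⟨[true, true], .cons_true_true .nil, by simp [mu, genb]⟩
  | one => exact ⟨[], .nil, rfl⟩
  | mul _ _ _ _ hy hz =>
    obtain ⟨v, hv, rfl⟩ := hy
    obtain ⟨u, hu, rfl⟩ := hz
    exact ⟨v ++ u, hv.append hu, mu_append v u⟩

theorem repr_eq_zero_of_mem_adjoin {x : FreeA} (hx : x ∈ Algebra.adjoin ℚ {gena, genb * genb})
    {w : List Bool} (hw : ¬EvenRuns w) :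
    (FreeAlgebra.basisFreeMonoid ℚ Bool).repr x (FreeMonoid.ofList w) = 0 := by
  rw [← Subalgebra.mem_toSubmodule, Algebra.adjoin_eq_span] at hx
  induction hx using Submodule.span_induction with
  | mem y hy =>
    obtain ⟨v, hv, rfl⟩ := exists_evenRuns_of_mem_closure hy
    rw [basisFreeMonoid_repr_mu, if_neg (by rintro rfl; exact hw hv)]
  | zero => simp
  | add y z _ _ hy hz => simp [hy, hz]
  | smul c y _ hy => simp [hy]

theorem sum_smul_mu_mem_adjoin_iff (s : Finset (List Bool)) (c : List Bool → ℚ) :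
    ∑ w ∈ s, c w • mu w ∈ Algebra.adjoin ℚ {gena, genb * genb} ↔
      ∀ w ∈ s, ¬EvenRuns w → c w = 0 := by
  constructor
  · intro h w hw hbad
    have := repr_eq_zero_of_mem_adjoin h hbad
    simpa [basisFreeMonoid_repr_mu, hw] using this
  · intro h
    refine Subalgebra.sum_mem _ fun w hw => ?_
    by_cases hgood : EvenRuns w
    · exact Subalgebra.smul_mem _ (mu_mem_adjoin_of_evenRuns hgood) _
    · rw [h w hw hgood, zero_smul]
      exact zero_mem _

noncomputable def hadamard : FreeA →ₐ[ℚ] FreeA :=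
  FreeAlgebra.lift ℚ fun x => if x then gena - genb else gena + genb

theorem hadamard_gena : hadamard gena = gena + genb := by simp [hadamard, gena]

theorem hadamard_genb : hadamard genb = gena - genb := by simp [hadamard, genb]

theorem hadamard_injective : Function.Injective hadamard := by
  let halfHadamard : FreeA →ₐ[ℚ] FreeA :=
    FreeAlgebra.lift ℚ fun x => (2⁻¹ : ℚ) • if x then gena - genb else gena + genb
  have hinv : halfHadamard.comp hadamard = AlgHom.id ℚ FreeA := by
    ext x
    cases x <;> simp [halfHadamard, hadamard, gena, genb] <;> module
  exact Function.LeftInverse.injective (g := halfHadamard) fun x => congr($hinv x)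

theorem map_hadamard_adjoin :
    (Algebra.adjoin ℚ {gena + genb, gena * genb + genb * gena}).map hadamard =
      Algebra.adjoin ℚ {gena, genb * genb} := by
  have hc : hadamard (gena + genb) = (2 : ℚ) • gena := by
    rw [map_add, hadamard_gena, hadamard_genb]; module
  have hd : hadamard (gena * genb + genb * gena) = (2 : ℚ) • (gena * gena - genb * genb) := by
    rw [map_add, map_mul, map_mul, hadamard_gena, hadamard_genb, two_smul]; noncomm_ring
  rw [AlgHom.map_adjoin, Set.image_pair, hc, hd]
  set S := Algebra.adjoin ℚ {(2 : ℚ) • gena, (2 : ℚ) • (gena * gena - genb * genb)}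
  have hc' : (2 : ℚ) • gena ∈ S := Algebra.subset_adjoin (Set.mem_insert _ _)
  have hd' : (2 : ℚ) • (gena * gena - genb * genb) ∈ S :=
    Algebra.subset_adjoin (Set.mem_insert_of_mem _ rfl)
  have ha : gena ∈ S := by
    convert S.smul_mem hc' (2⁻¹ : ℚ) using 1; module
  have hb : genb * genb ∈ S := by
    convert sub_mem (mul_mem ha ha) (S.smul_mem hd' (2⁻¹ : ℚ)) using 1; module
  apply le_antisymm <;> refine Algebra.adjoin_le (Set.pair_subset ?_ ?_)
  · exact Subalgebra.smul_mem _ (Algebra.subset_adjoin (Set.mem_insert _ _)) _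
  · refine Subalgebra.smul_mem _ (sub_mem (mul_mem ?_ ?_) ?_) _ <;>
      exact Algebra.subset_adjoin (by simp)
  · exact ha
  · exact hb

theorem mem_adjoin_iff_hadamard_mem {x : FreeA} :
    x ∈ Algebra.adjoin ℚ {gena + genb, gena * genb + genb * gena} ↔
      hadamard x ∈ Algebra.adjoin ℚ {gena, genb * genb} := by
  rw [← map_hadamard_adjoin, Subalgebra.mem_map]
  exact ⟨fun hx => ⟨x, hx, rfl⟩, fun ⟨y, hy, hyx⟩ => hadamard_injective hyx ▸ hy⟩

theorem hadamard_mu (E : List Bool) :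
    hadamard (mu E) = ∑ w ∈ allWords E.length, walshChar w E • mu w := by
  induction E with
  | nil => simp [allWords, mu]
  | cons e E ih =>
    rw [mu_cons, map_mul, ih, List.length_cons, sum_allWords_succ, mul_sum]
    simp only [walshChar_cons, mu_cons, Bool.false_and, Bool.true_and, mul_smul_comm, mul_smul]
    cases e <;> simp [hadamard, gena, genb, add_mul, smul_add, sum_add_distrib,
      sub_eq_add_neg]

theorem hadamard_sum_smul_mu (n : ℕ) (β : List Bool → ℚ) :
    hadamard (∑ E ∈ allWords n, β E • mu E) = ∑ w ∈ allWords n, walsh n β w • mu w := by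
  simp_rw [map_sum, map_smul, walsh, sum_smul, mul_comm _ (β _), mul_smul]
  rw [sum_comm]
  refine sum_congr rfl fun E hE => ?_
  rw [hadamard_mu, mem_allWords.mp hE, smul_sum]

theorem mem_adjoin_cd_iff_dualBB_general (n : ℕ) (β : List Bool → ℚ) :
    (∑ E ∈ allWords n, β E • mu E) ∈
        Algebra.adjoin ℚ {gena + genb, gena * genb + genb * gena} ↔
      DualBB n β := by
  rw [mem_adjoin_iff_hadamard_mem, hadamard_sum_smul_mu, sum_smul_mu_mem_adjoin_iff,
    dualBB_iff_walsh]

theorem mem_adjoin_cd_iff_dualBB (n : ℕ) (hn : 1 ≤ n) (β : List Bool → ℚ) :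
    (∑ E ∈ allWords n, β E • mu E) ∈
        Algebra.adjoin ℚ {gena + genb, gena * genb + genb * gena} ↔
      DualBB n β :=
  mem_adjoin_cd_iff_dualBB_general n β
end

section
/- Let n ≥ 2 and let E and T be sparse 0-1 words of length n−1. Then h_{E,T} = 1 if E = T, and h_{E,T} = 0 otherwise. (Equivalently, the only sparse word in G(T) is T itself, with sign +1; this is the key step showing the D_T with T sparse are linearly independent.) -/
/-- `S(T)`: the set of (1-indexed) positions of the 1's of the word `T`. -/
def onesSet (T : List Bool) : Finset ℕ :=
  ((Finset.range T.length).filter (fun i => T.getD i false = true)).image (· + 1)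

/-- The increasing list `s_1 < ⋯ < s_t` of positions of the 1's of `T`. -/
def sListOf (T : List Bool) : List ℕ := (onesSet T).sort (· ≤ ·)

/-- `sfun n T j = s_j`, with the conventions `s_0 = 0` and `s_j = n` for `j > t`. -/
def sfun (n : ℕ) (T : List Bool) (j : ℕ) : ℕ :=
  if j = 0 then 0 else (sListOf T).getD (j - 1) n

/-- `tOf T = t`, the number of 1's of `T`. -/
def tOf (T : List Bool) : ℕ := (onesSet T).card

/-- `S ∩ (s_j, s_{j+1})`, the elements of `S` lying strictly between `s_j` and `s_{j+1}`. -/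
def intv (n : ℕ) (T : List Bool) (S : Finset ℕ) (j : ℕ) : Finset ℕ :=
  S.filter (fun x => sfun n T j < x ∧ x < sfun n T (j + 1))

/-- `S ∈ G(T)`: every interval `(s_j, s_{j+1})` with `0 ≤ j ≤ t-1` meets `S`, and any two
elements of `S` in a common interval `(s_j, s_{j+1})`, `0 ≤ j ≤ t`, are congruent mod 2. -/
def memG (n : ℕ) (T : List Bool) (S : Finset ℕ) : Prop :=
  (∀ j < tOf T, (intv n T S j).Nonempty) ∧
    (∀ j ≤ tOf T, ∀ x ∈ intv n T S j, ∀ y ∈ intv n T S j, x % 2 = y % 2)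

/-- `sgn(S,T) = (-1)^(Σ_{j=0}^{t-1} (s_{j+1} - y_j - 1))`, with `y_j` the least element of
`S ∩ (s_j, s_{j+1})` (any choice gives the same value when `S ∈ G(T)`). -/
noncomputable def sgnST (n : ℕ) (T : List Bool) (S : Finset ℕ) : ℚ :=
  (-1 : ℚ) ^ (∑ j ∈ Finset.range (tOf T),
    (sfun n T (j + 1) - WithTop.untopD 0 (intv n T S j).min - 1))

/-- `h_{S,T}`. -/
noncomputable def hST (n : ℕ) (T : List Bool) (S : Finset ℕ) : ℚ :=
  haveI := Classical.propDecidable (memG n T S)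
  if memG n T S then sgnST n T S else 0

/-- `∂(E) = {i ∈ [m-1] : E_i ≠ E_{i+1}} ∪ {m}` for a word `E` of length `m` (1-indexed). -/
def bnd (E : List Bool) : Finset ℕ :=
  ((Finset.Icc 1 (E.length - 1)).filter
      (fun i => E.getD (i - 1) false ≠ E.getD i false)) ∪ {E.length}

/-- A word is sparse if it does not begin with a 1 and has no two consecutive 1's. -/
def Sparse (E : List Bool) : Prop :=
  E.head? ≠ some true ∧ E.Chain' (fun a b => ¬(a = true ∧ b = true))

/-! For a sparse word every 1, at a position `x ≥ 2`, contributes the consecutive pair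
`x - 1, x` to `∂(E)`, and besides these pairs `∂(E)` only contains the last position. Hence
for `E = T` each interval `(s_j, s_{j+1})` meets `∂(T)` exactly in `s_{j+1} - 1`, so
`∂(T) ∈ G(T)` and every exponent of the sign vanishes.

Conversely let `∂(E) ∈ G(T)`. If `s_j` is a 1 of `E` (or `j = 0`), sparsity forces every 1 `x`
of `E` in `(s_j, s_{j+1})` to have both `x - 1` and `x` in that interval, contradicting the
parity condition. So the interval holds no 1 of `E`, and the element of `∂(E)` it must contain
can only be `s_{j+1} - 1`, making `s_{j+1}` a 1 of `E`. By induction on `j`, `E` and `T` have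
the same 1's. -/

theorem lt_length_of_getD_eq_true {T : List Bool} {x : ℕ} (h : T.getD x false = true) :
    x < T.length := by
  by_contra hx
  rw [List.getD_eq_default _ _ (by omega)] at h
  exact Bool.false_ne_true h

theorem succ_mem_onesSet {T : List Bool} {x : ℕ} :
    x + 1 ∈ onesSet T ↔ T.getD x false = true := by
  simp only [onesSet, Finset.mem_image, Finset.mem_filter, Finset.mem_range,
    Nat.add_right_cancel_iff, exists_eq_right, and_iff_right_iff_imp]
  exact lt_length_of_getD_eq_true

theorem mem_onesSet {T : List Bool} {x : ℕ} :
    x ∈ onesSet T ↔ 1 ≤ x ∧ T.getD (x - 1) false = true := by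
  rcases x with _ | x
  · simp [onesSet]
  · simp [succ_mem_onesSet]

theorem le_length_of_mem_onesSet {T : List Bool} {x : ℕ} (hx : x ∈ onesSet T) :
    x ≤ T.length := by
  obtain ⟨hx1, hx⟩ := mem_onesSet.mp hx
  have := lt_length_of_getD_eq_true hx
  omega

theorem eq_of_onesSet_eq {E T : List Bool} (hlen : E.length = T.length)
    (h : onesSet E = onesSet T) : E = T := by
  refine List.ext_getElem hlen fun i hiE hiT => Bool.eq_iff_iff.mpr ?_
  have := Finset.ext_iff.mp h (i + 1)
  rwa [succ_mem_onesSet, succ_mem_onesSet, List.getD_eq_getElem _ _ hiE,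
    List.getD_eq_getElem _ _ hiT] at this

theorem Sparse.getD_zero {E : List Bool} (hE : Sparse E) : E.getD 0 false = false := by
  cases E with
  | nil => rfl
  | cons a l => simpa using hE.1

theorem Sparse.getD_succ {E : List Bool} (hE : Sparse E) {i : ℕ} (h : E.getD i false = true) :
    E.getD (i + 1) false = false := by
  by_contra h'
  have hi := lt_length_of_getD_eq_true (Bool.not_eq_false _ ▸ h')
  have := List.isChain_iff_getElem.mp hE.2 i hi
  rw [List.getD_eq_getElem _ _ (by omega)] at h
  rw [List.getD_eq_getElem _ _ hi] at h'
  simp_all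

theorem Sparse.two_le_of_mem_onesSet {E : List Bool} (hE : Sparse E) {x : ℕ}
    (hx : x ∈ onesSet E) : 2 ≤ x := by
  obtain ⟨hx1, hx⟩ := mem_onesSet.mp hx
  by_contra h
  obtain rfl : x = 1 := by omega
  rw [Nat.sub_self, hE.getD_zero] at hx
  exact Bool.false_ne_true hx

theorem Sparse.succ_notMem_onesSet {E : List Bool} (hE : Sparse E) {x : ℕ}
    (hx : x ∈ onesSet E) : x + 1 ∉ onesSet E := by
  obtain ⟨hx1, hx⟩ := mem_onesSet.mp hx
  rw [succ_mem_onesSet, show x = x - 1 + 1 by omega, hE.getD_succ hx]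
  exact Bool.false_ne_true

theorem Sparse.mem_bnd_iff {E : List Bool} (hE : Sparse E) {i : ℕ} :
    i ∈ bnd E ↔ i = E.length ∨ i ∈ onesSet E ∨ i + 1 ∈ onesSet E := by
  simp only [bnd, Finset.mem_union, Finset.mem_filter, Finset.mem_Icc, Finset.mem_singleton]
  rcases i with _ | i
  · rw [succ_mem_onesSet, hE.getD_zero]
    simp [mem_onesSet]
  · rw [succ_mem_onesSet, succ_mem_onesSet, Nat.add_sub_cancel]
    have hi := @lt_length_of_getD_eq_true E i
    have hi' := @lt_length_of_getD_eq_true E (i + 1)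
    have := hE.getD_succ (i := i)
    cases ha : E.getD i false <;> cases hb : E.getD (i + 1) false <;>
      simp only [ha, hb, true_implies, Bool.true_eq_false] at hi hi' this <;> simp <;> omega

section Positions

variable {n : ℕ} {T : List Bool}

theorem length_sListOf (T : List Bool) : (sListOf T).length = tOf T := Finset.length_sort _

theorem sfun_succ_of_lt {j : ℕ} (hj : j < tOf T) :
    sfun n T (j + 1) = (sListOf T)[j]'(by rwa [length_sListOf]) := by
  rw [sfun, if_neg j.succ_ne_zero, Nat.add_sub_cancel, List.getD_eq_getElem]

theorem sfun_of_tOf_lt {j : ℕ} (hj : tOf T < j) : sfun n T j = n := by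
  rw [sfun, if_neg (by omega), List.getD_eq_default _ _ (by rw [length_sListOf]; omega)]

theorem sfun_mem_onesSet {j : ℕ} (h1 : 1 ≤ j) (h2 : j ≤ tOf T) :
    sfun n T j ∈ onesSet T := by
  obtain ⟨j, rfl⟩ := Nat.exists_eq_add_of_le' h1
  rw [sfun_succ_of_lt (by omega), ← Finset.mem_sort (· ≤ ·)]
  exact List.getElem_mem _

theorem exists_sfun_eq_of_mem_onesSet {x : ℕ} (hx : x ∈ onesSet T) :
    ∃ j, 1 ≤ j ∧ j ≤ tOf T ∧ sfun n T j = x := by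
  rw [← Finset.mem_sort (· ≤ ·)] at hx
  obtain ⟨j, hj, rfl⟩ := List.getElem_of_mem hx
  have hj' : j < tOf T := by rwa [← length_sListOf]
  exact ⟨j + 1, by omega, hj', sfun_succ_of_lt hj'⟩

theorem sfun_le_length {j : ℕ} (hj : j ≤ tOf T) : sfun n T j ≤ T.length := by
  rcases Nat.eq_zero_or_pos j with rfl | hpos
  · exact Nat.zero_le _
  · exact le_length_of_mem_onesSet (sfun_mem_onesSet hpos hj)

theorem sfun_strictMonoOn (n : ℕ) (T : List Bool) :
    StrictMonoOn (sfun n T) (Set.Iic (tOf T)) := by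
  intro i hi j hj hij
  obtain ⟨j, rfl⟩ := Nat.exists_eq_add_of_lt hij
  rcases i with _ | i
  · exact (mem_onesSet.mp (sfun_mem_onesSet (n := n) (by omega) hj)).1
  · rw [sfun_succ_of_lt (by simp at hi; omega), sfun_succ_of_lt (by simp at hj; omega)]
    exact (Finset.sortedLT_sort _).getElem_lt_getElem_of_lt (by omega)

theorem notMem_onesSet_of_sfun_lt_of_lt_sfun {j x : ℕ} (hj : j ≤ tOf T)
    (h1 : sfun n T j < x) (h2 : x < sfun n T (j + 1)) : x ∉ onesSet T := by
  intro hx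
  obtain ⟨k, hk1, hkt, rfl⟩ := exists_sfun_eq_of_mem_onesSet (n := n) hx
  have hmono := sfun_strictMonoOn n T
  have hjk : j < k := (hmono.lt_iff_lt hj hkt).mp h1
  have hkj : ¬ j + 1 ≤ k := fun h =>
    ((hmono.le_iff_le (show j + 1 ≤ tOf T by omega) hkt).mpr h).not_gt h2
  omega

theorem exists_sfun_eq_or_between {x : ℕ} (hx0 : 0 < x) (hxn : x < n) :
    (∃ j, 1 ≤ j ∧ j ≤ tOf T ∧ sfun n T j = x) ∨
      ∃ j ≤ tOf T, sfun n T j < x ∧ x < sfun n T (j + 1) := by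
  have hex : ∃ j, x < sfun n T (j + 1) := ⟨tOf T, by rwa [sfun_of_tOf_lt (by omega)]⟩
  classical
  set j := Nat.find hex
  have hjt : j ≤ tOf T := Nat.find_min' hex (by rwa [sfun_of_tOf_lt (by omega)])
  have hle : sfun n T j ≤ x := by
    rcases Nat.eq_zero_or_pos j with h0 | hpos
    · rw [h0]; exact Nat.zero_le _
    · have := Nat.find_min hex (show j - 1 < j by omega)
      rwa [Nat.sub_add_cancel hpos, not_lt] at this
  rcases hle.lt_or_eq with hlt | heq
  · exact .inr ⟨j, hjt, hlt, Nat.find_spec hex⟩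
  · exact .inl ⟨j, Nat.pos_of_ne_zero fun h => by simp [h, sfun] at heq; omega, hjt, heq⟩

theorem Sparse.sfun_add_two_le (hT : Sparse T) {j : ℕ} (hj : j < tOf T) :
    sfun n T j + 2 ≤ sfun n T (j + 1) := by
  have hmem : sfun n T (j + 1) ∈ onesSet T := sfun_mem_onesSet (by omega) hj
  rcases Nat.eq_zero_or_pos j with rfl | hpos
  · exact hT.two_le_of_mem_onesSet hmem
  · have hlt := sfun_strictMonoOn n T (Set.mem_Iic.mpr hj.le)
      (Set.mem_Iic.mpr (show j + 1 ≤ tOf T from hj)) j.lt_add_one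
    have hne : sfun n T j + 1 ≠ sfun n T (j + 1) := fun h =>
      hT.succ_notMem_onesSet (sfun_mem_onesSet hpos hj.le) (h ▸ hmem)
    omega

end Positions

theorem mem_intv {n : ℕ} {T : List Bool} {S : Finset ℕ} {j x : ℕ} :
    x ∈ intv n T S j ↔ x ∈ S ∧ sfun n T j < x ∧ x < sfun n T (j + 1) :=
  Finset.mem_filter

section SelfBoundary

variable {n : ℕ} {T : List Bool}

theorem Sparse.eq_of_mem_intv_bnd_self (hT : Sparse T) (hlen : T.length = n - 1) {j x : ℕ}
    (hj : j ≤ tOf T) (hx : x ∈ intv n T (bnd T) j) : x = sfun n T (j + 1) - 1 := by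
  obtain ⟨hxb, h1, h2⟩ := mem_intv.mp hx
  rcases hT.mem_bnd_iff.mp hxb with rfl | hxT | hxT
  · rcases hj.lt_or_eq with hjt | rfl
    · have := sfun_le_length (n := n) (show j + 1 ≤ tOf T from hjt)
      omega
    · rw [sfun_of_tOf_lt (Nat.lt_succ_self _)] at h2 ⊢
      omega
  · exact absurd hxT (notMem_onesSet_of_sfun_lt_of_lt_sfun hj h1 h2)
  · have : ¬ x + 1 < sfun n T (j + 1) := fun h =>
      notMem_onesSet_of_sfun_lt_of_lt_sfun hj (by omega) h hxT
    omega

theorem Sparse.intv_bnd_self (hT : Sparse T) (hlen : T.length = n - 1) {j : ℕ} (hj : j < tOf T) :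
    intv n T (bnd T) j = {sfun n T (j + 1) - 1} := by
  refine Finset.eq_singleton_iff_unique_mem.mpr
    ⟨?_, fun x => hT.eq_of_mem_intv_bnd_self hlen hj.le⟩
  have hmem : sfun n T (j + 1) ∈ onesSet T := sfun_mem_onesSet (by omega) hj
  have hgap := hT.sfun_add_two_le (n := n) hj
  have hpred : sfun n T (j + 1) - 1 + 1 = sfun n T (j + 1) := by omega
  exact mem_intv.mpr ⟨hT.mem_bnd_iff.mpr (.inr (.inr (hpred ▸ hmem))), by omega, by omega⟩

theorem Sparse.memG_bnd_self (hT : Sparse T) (hlen : T.length = n - 1) : memG n T (bnd T) := by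
  refine ⟨fun j hj => by simp [hT.intv_bnd_self hlen hj], fun j hj x hx y hy => ?_⟩
  rw [hT.eq_of_mem_intv_bnd_self hlen hj hx, hT.eq_of_mem_intv_bnd_self hlen hj hy]

theorem Sparse.sgnST_bnd_self (hT : Sparse T) (hlen : T.length = n - 1) :
    sgnST n T (bnd T) = 1 := by
  rw [sgnST, Finset.sum_eq_zero, pow_zero]
  intro j hj
  have hj : j < tOf T := Finset.mem_range.mp hj
  have := hT.sfun_add_two_le (n := n) hj
  rw [hT.intv_bnd_self hlen hj, Finset.min_singleton, WithTop.untopD_coe]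
  omega

theorem Sparse.hST_bnd_self (hT : Sparse T) (hlen : T.length = n - 1) : hST n T (bnd T) = 1 := by
  unfold hST
  rw [if_pos (hT.memG_bnd_self hlen), hT.sgnST_bnd_self hlen]

end SelfBoundary

section Converse

variable {n : ℕ} {E T : List Bool}

theorem Sparse.notMem_onesSet_between (hE : Sparse E) {j y : ℕ}
    (hpar : ∀ x ∈ intv n T (bnd E) j, ∀ z ∈ intv n T (bnd E) j, x % 2 = z % 2)
    (hprev : j = 0 ∨ sfun n T j ∈ onesSet E)
    (h1 : sfun n T j < y) (h2 : y < sfun n T (j + 1)) : y ∉ onesSet E := by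
  intro hy
  have hgap : sfun n T j + 1 < y := by
    rcases hprev with rfl | hprev
    · exact hE.two_le_of_mem_onesSet hy
    · exact Nat.lt_of_le_of_ne h1 fun h => hE.succ_notMem_onesSet hprev (h ▸ hy)
  have hpred : y - 1 + 1 = y := by omega
  have hy1 : y - 1 ∈ intv n T (bnd E) j :=
    mem_intv.mpr ⟨hE.mem_bnd_iff.mpr (.inr (.inr (hpred ▸ hy))), by omega, by omega⟩
  have hy2 : y ∈ intv n T (bnd E) j :=
    mem_intv.mpr ⟨hE.mem_bnd_iff.mpr (.inr (.inl hy)), h1, h2⟩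
  have := hpar _ hy1 _ hy2
  omega

theorem Sparse.sfun_mem_onesSet_of_memG (hE : Sparse E) (hlen : T.length ≤ E.length)
    (hG : memG n T (bnd E)) {j : ℕ} (hj : j ≤ tOf T) : j = 0 ∨ sfun n T j ∈ onesSet E := by
  induction j with
  | zero => exact .inl rfl
  | succ j ih =>
    refine .inr ?_
    have hjt : j < tOf T := hj
    have hfree {y : ℕ} := hE.notMem_onesSet_between (y := y) (hG.2 j hjt.le) (ih hjt.le)
    obtain ⟨z, hz⟩ := hG.1 j hjt
    obtain ⟨hzE, h1, h2⟩ := mem_intv.mp hz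
    have := sfun_le_length (n := n) hj
    rcases hE.mem_bnd_iff.mp hzE with rfl | hzE | hzE
    · omega
    · exact absurd hzE (hfree h1 h2)
    · have : z + 1 = sfun n T (j + 1) := by
        by_contra h
        exact hfree (by omega) (by omega) hzE
      exact this ▸ hzE

theorem Sparse.onesSet_eq_of_memG (hE : Sparse E) (hElen : E.length = n - 1)
    (hTlen : T.length = n - 1) (hG : memG n T (bnd E)) : onesSet E = onesSet T := by
  have hsfun {j : ℕ} := hE.sfun_mem_onesSet_of_memG (j := j) (hTlen.trans hElen.symm).le hG
  ext x
  constructor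
  · intro hx
    have := le_length_of_mem_onesSet hx
    have := (mem_onesSet.mp hx).1
    rcases exists_sfun_eq_or_between (n := n) (T := T) (x := x) (by omega) (by omega) with
      ⟨j, hj1, hjt, rfl⟩ | ⟨j, hjt, h1, h2⟩
    · exact sfun_mem_onesSet hj1 hjt
    · exact absurd hx (hE.notMem_onesSet_between (hG.2 j hjt) (hsfun hjt) h1 h2)
  · intro hx
    obtain ⟨j, hj1, hjt, rfl⟩ := exists_sfun_eq_of_mem_onesSet (n := n) hx
    exact (hsfun hjt).resolve_left (by omega)

theorem Sparse.hST_bnd_eq_zero_of_ne (hE : Sparse E) (hElen : E.length = n - 1)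
    (hTlen : T.length = n - 1) (hne : E ≠ T) : hST n T (bnd E) = 0 := by
  unfold hST
  refine if_neg fun hG => hne (eq_of_onesSet_eq ?_ (hE.onesSet_eq_of_memG hElen hTlen hG))
  rw [hElen, hTlen]

end Converse

theorem hST_sparse_delta_general (n : ℕ) (E T : List Bool)
    (hE : E.length = n - 1) (hT : T.length = n - 1)
    (hEs : Sparse E) (hTs : Sparse T) :
    hST n T (bnd E) = if E = T then 1 else 0 := by
  split_ifs with h
  · subst h
    exact hTs.hST_bnd_self hT
  · exact hEs.hST_bnd_eq_zero_of_ne hE hT h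

theorem hST_sparse_delta (n : ℕ) (hn : 2 ≤ n) (E T : List Bool)
    (hE : E.length = n - 1) (hT : T.length = n - 1)
    (hEs : Sparse E) (hTs : Sparse T) :
    hST n T (bnd E) = if E = T then 1 else 0 :=
  hST_sparse_delta_general n E T hE hT hEs hTs
end

section
/- With the notation of the 3-complete setup, for all w ∈ W' one has ht(ρ(w)(α_1)) ≥ ℓ(w) + 1, where ht(Σ c_i α_i) = Σ c_i is the height of a vector with respect to the standard basis. -/
/-!
`ρ` preserves the form `B(u, v) = 3 ⟨u, v⟩ - ht u · ht v`. By Tits' argument, which reduces to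
the dihedral subgroups of order 6, `ρ(w) α_i` is a nonnegative vector of height at least `1`
whenever `ℓ(w s_i) > ℓ(w)`. Elements of `W'` fix the `α_1`-coordinate, so `s_1` is never a left
descent of `w ∈ W'`. If `s_x` is one and `u = s_x w`, then
`ht(ρ(w) α_1) = ht(ρ(u) α_1) - B(ρ(u) α_1, α_x)`, and
`B(ρ(u) α_1, α_x) = B(α_1, ρ(u⁻¹) α_x) = -ht(ρ(u⁻¹) α_x) ≤ -1`, because `ρ(u⁻¹) α_x` is positive
with vanishing `α_1`-coordinate. Induction on `ℓ(w)` concludes.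
-/

/-- `c_k(w)`: the `k`-th coordinate of `ρ(w)(α_{i0})`, where `α_{i0}` is the `i0`-th
standard basis vector. -/
noncomputable def coeffc {l : ℕ} {W : Type*} [Group W]
    (ρ : W →* Module.End ℝ (Fin l → ℝ)) (i0 : Fin l) (w : W) (k : Fin l) : ℝ :=
  ρ w (Pi.single i0 1) k

/-- `d_i(w) = 2 c_i(w) - Σ_{k ≠ i} c_k(w)`. -/
noncomputable def coeffd {l : ℕ} {W : Type*} [Group W]
    (ρ : W →* Module.End ℝ (Fin l → ℝ)) (i0 : Fin l) (w : W) (i : Fin l) : ℝ :=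
  2 * coeffc ρ i0 w i - ∑ k ∈ Finset.univ.erase i, coeffc ρ i0 w k

theorem Subgroup.mem_closure_pair_of_braid {G : Type*} [Group G] {s t : G}
    (hs : s * s = 1) (ht : t * t = 1) (hst : s * t * s = t * s * t) {g : G}
    (hg : g ∈ Subgroup.closure {s, t}) :
    g = 1 ∨ g = s ∨ g = t ∨ g = s * t ∨ g = t * s ∨ g = s * t * s := by
  have hs' : s⁻¹ = s := inv_eq_of_mul_eq_one_right hs
  have ht' : t⁻¹ = t := inv_eq_of_mul_eq_one_right ht
  have hss : ∀ a, a * s * s = a := fun a => by rw [mul_assoc, hs, mul_one]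
  have step : ∀ x ∈ ({s, t} : Set G), ∀ y : G,
      (y = 1 ∨ y = s ∨ y = t ∨ y = s * t ∨ y = t * s ∨ y = s * t * s) →
      (x * y = 1 ∨ x * y = s ∨ x * y = t ∨ x * y = s * t ∨ x * y = t * s ∨
        x * y = s * t * s) := by
    rintro x (rfl | rfl) y (rfl | rfl | rfl | rfl | rfl | rfl) <;>
      simp only [mul_one, hs, ht, ← mul_assoc, one_mul, true_or, or_true, ← hst, hss]
  induction hg using Subgroup.closure_induction_left with
  | one => exact Or.inl rfl
  | mul_left x hx y _ ih => exact step x hx y ih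
  | inv_mul_cancel x hx y _ ih =>
    rcases hx with rfl | rfl
    · rw [hs']; exact step _ (by simp) y ih
    · rw [ht']; exact step _ (by simp) y ih

namespace CoxeterSystem

variable {B : Type*} {M : CoxeterMatrix B} {W : Type*} [Group W] (cs : CoxeterSystem M W)

theorem exists_mul_eq_forall_not_isRightDescent (I : Set B) (w : W) :
    ∃ v d, d ∈ Subgroup.closure (cs.simple '' I) ∧ v * d = w ∧
      cs.length v + cs.length d ≤ cs.length w ∧ ∀ x ∈ I, ¬ cs.IsRightDescent v x := by
  induction h : cs.length w using Nat.strong_induction_on generalizing w with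
  | _ n ih =>
  by_cases hw : ∃ x ∈ I, cs.IsRightDescent w x
  · obtain ⟨x, hxI, hx⟩ := hw
    rw [isRightDescent_iff] at hx
    obtain ⟨v, d, hd, hvd, hlen, hv⟩ := ih _ (by omega) (w * cs.simple x) rfl
    refine ⟨v, d * cs.simple x, mul_mem hd (Subgroup.subset_closure ⟨x, hxI, rfl⟩), ?_, ?_, hv⟩
    · rw [← mul_assoc, hvd, simple_mul_simple_cancel_right]
    · have := cs.length_mul_le d (cs.simple x)
      rw [length_simple] at this
      omega
  · push Not at hw
    exact ⟨w, 1, one_mem _, mul_one w, by simp [h], hw⟩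

theorem simple_mul_simple_mul_simple_of_eq_three {i j : B} (hij : M i j = 3) :
    cs.simple i * cs.simple j * cs.simple i = cs.simple j * cs.simple i * cs.simple j := by
  simpa [braidWord, alternatingWord, hij, M.symmetric j i, wordProd, mul_assoc] using
    (cs.wordProd_braidWord_eq i j).symm

end CoxeterSystem

section GeometricRep

variable {B : Type*} [Fintype B]

/-- Twice the Tits form of the 3-complete Coxeter matrix: it is `2` on `(α i, α i)` and `-1` on
`(α i, α j)` for `i ≠ j`. -/
def coxeterForm (u v : B → ℝ) : ℝ :=
  3 * ∑ k, u k * v k - (∑ k, u k) * ∑ k, v k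

theorem coxeterForm_comm (u v : B → ℝ) : coxeterForm u v = coxeterForm v u := by
  simp only [coxeterForm, mul_comm]

variable [DecidableEq B]

theorem coxeterForm_single_right (v : B → ℝ) (i : B) :
    coxeterForm v (Pi.single i 1) = 3 * v i - ∑ k, v k := by
  simp [coxeterForm, Pi.single_apply]

variable {M : CoxeterMatrix B} {W : Type*} [Group W]

def IsCompleteGeometricRep (cs : CoxeterSystem M W) (ρ : W →* Module.End ℝ (B → ℝ)) : Prop :=
  ∀ i : B,
    (ρ (cs.simple i)) (Pi.single i (1 : ℝ)) = -Pi.single i 1 ∧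
    ∀ j : B, j ≠ i →
      (ρ (cs.simple i)) (Pi.single j (1 : ℝ)) = Pi.single i 1 + Pi.single j 1

namespace IsCompleteGeometricRep

variable {cs : CoxeterSystem M W} {ρ : W →* Module.End ℝ (B → ℝ)}
  (hρ : IsCompleteGeometricRep cs ρ)
include hρ

theorem simple_apply (i : B) (v : B → ℝ) :
    ρ (cs.simple i) v = v - coxeterForm v (Pi.single i 1) • Pi.single i 1 := by
  have hlin : ρ (cs.simple i) = LinearMap.id -
      LinearMap.smulRight (3 • LinearMap.proj i - ∑ k, LinearMap.proj k : (B → ℝ) →ₗ[ℝ] ℝ)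
        (Pi.single i 1) := by
    refine (Pi.basisFun ℝ B).ext fun j => ?_
    rcases eq_or_ne j i with rfl | hji
    · rw [Pi.basisFun_apply, (hρ j).1]
      ext k
      by_cases hk : k = j <;> norm_num [hk, Pi.single_apply]
    · rw [Pi.basisFun_apply, (hρ i).2 j hji]
      ext k
      by_cases hk : k = j <;> by_cases hk' : k = i <;> simp_all [Pi.single_apply]
  rw [hlin, coxeterForm_single_right]
  ext k
  simp [mul_comm]

theorem simple_apply_of_ne (i : B) (v : B → ℝ) {k : B} (hk : k ≠ i) :
    ρ (cs.simple i) v k = v k := by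
  simp [hρ.simple_apply, hk]

theorem sum_simple_apply (i : B) (v : B → ℝ) :
    ∑ k, ρ (cs.simple i) v k = ∑ k, v k - coxeterForm v (Pi.single i 1) := by
  simp [hρ.simple_apply, Finset.sum_sub_distrib, Pi.single_apply]

theorem coxeterForm_simple (i : B) (u v : B → ℝ) :
    coxeterForm (ρ (cs.simple i) u) (ρ (cs.simple i) v) = coxeterForm u v := by
  simp only [hρ.simple_apply, coxeterForm_single_right]
  simp only [coxeterForm, Pi.sub_apply, Pi.smul_apply, Pi.single_apply, smul_eq_mul, mul_ite,
    mul_one, mul_zero, mul_sub, sub_mul, ite_mul, zero_mul, Finset.sum_sub_distrib,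
    Finset.sum_ite_eq', Finset.mem_univ, ↓reduceIte]
  ring

theorem coxeterForm_map (w : W) (u v : B → ℝ) :
    coxeterForm (ρ w u) (ρ w v) = coxeterForm u v := by
  induction w using cs.simple_induction generalizing u v with
  | simple i => exact hρ.coxeterForm_simple i u v
  | one => simp
  | mul w₁ w₂ h₁ h₂ => simp only [map_mul, Module.End.mul_apply, h₁, h₂]

theorem apply_single_self_ne_zero_of_length_le_one {d : W} (hd : cs.length d ≤ 1) (i : B) :
    ρ d (Pi.single i 1) i ≠ 0 := by
  rcases Nat.le_one_iff_eq_zero_or_eq_one.mp hd with hd | hd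
  · simp [cs.length_eq_zero_iff.mp hd]
  · obtain ⟨k, rfl⟩ := cs.length_eq_one_iff.mp hd
    by_cases hk : i = k <;>
      norm_num [hρ.simple_apply, coxeterForm_single_right, Pi.single_apply, hk]

/-- The six elements `1, s_i, s_j, s_i s_j, s_j s_i, s_i s_j s_i` send `α_i` to
`α_i, -α_i, α_i + α_j, α_j, -α_i - α_j, -α_j`; the negative images occur exactly at descents. -/
theorem exists_nonneg_smul_add_smul {i j : B} (hij : M i j = 3) {d : W}
    (hd : d ∈ Subgroup.closure (cs.simple '' {i, j})) (hdi : ¬ cs.IsRightDescent d i) :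
    ∃ a b : ℝ, 0 ≤ a ∧ 0 ≤ b ∧ 1 ≤ a + b ∧
      ρ d (Pi.single i 1) = a • Pi.single i 1 + b • Pi.single j 1 := by
  have hne : j ≠ i := by rintro rfl; simp at hij
  have hsi := (hρ i).1
  have hsj := (hρ j).2 i hne.symm
  have hsij := (hρ i).2 j hne
  rw [Set.image_pair] at hd
  rw [cs.not_isRightDescent_iff] at hdi
  rcases Subgroup.mem_closure_pair_of_braid (cs.simple_mul_simple_self i)
      (cs.simple_mul_simple_self j) (cs.simple_mul_simple_mul_simple_of_eq_three hij) hd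
    with rfl | rfl | rfl | rfl | rfl | rfl
  · exact ⟨1, 0, by simp⟩
  · simp [cs.length_simple] at hdi
  · exact ⟨1, 1, by norm_num, by norm_num, by norm_num, by simp [hsj, add_comm]⟩
  · exact ⟨0, 1, by norm_num, by norm_num, by norm_num, by simp [hsi, hsj, hsij]⟩
  · rw [cs.simple_mul_simple_cancel_right, cs.length_simple] at hdi
    have h1 := cs.length_eq_zero_iff.mp (by omega : cs.length (cs.simple j * cs.simple i) = 0)
    have := congrFun (congrArg (fun g => ρ g (Pi.single i 1)) h1) i
    norm_num [hsi, hsj, hne.symm] at this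
  · rw [cs.simple_mul_simple_cancel_right] at hdi
    have hlen := cs.length_mul_le (cs.simple i) (cs.simple j)
    rw [cs.length_simple, cs.length_simple] at hlen
    refine absurd ?_ (hρ.apply_single_self_ne_zero_of_length_le_one (d := cs.simple i * cs.simple j * cs.simple i)
      (by omega) i)
    simp [hsi, hsj, hsij, hne]

theorem nonneg_and_one_le_sum_of_not_isRightDescent (hM : ∀ i j, i ≠ j → M i j = 3)
    {w : W} {i : B} (hwi : ¬ cs.IsRightDescent w i) :
    0 ≤ ρ w (Pi.single i 1) ∧ 1 ≤ ∑ k, ρ w (Pi.single i 1) k := by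
  induction h : cs.length w using Nat.strong_induction_on generalizing w i with
  | _ n ih =>
  by_cases hw1 : w = 1
  · simp [hw1]
  obtain ⟨j, hwj⟩ := cs.exists_rightDescent_of_ne_one hw1
  have hij : i ≠ j := by rintro rfl; exact hwi hwj
  obtain ⟨v, d, hd, rfl, hlen, hv⟩ := cs.exists_mul_eq_forall_not_isRightDescent {i, j} w
  have hvd : cs.length v < cs.length (v * d) := by
    by_contra! hle
    have hd1 : d = 1 := cs.length_eq_zero_iff.mp (by omega)
    exact hv j (by simp) (by simpa [hd1] using hwj)
  have hdi : ¬ cs.IsRightDescent d i := by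
    rw [cs.not_isRightDescent_iff] at hwi ⊢
    have hle := cs.length_mul_le v (d * cs.simple i)
    rw [← mul_assoc] at hle
    have := cs.length_mul_simple d i
    omega
  obtain ⟨a, b, ha, hb, hab, hdα⟩ := hρ.exists_nonneg_smul_add_smul (hM i j hij) hd hdi
  obtain ⟨hvi, hvi'⟩ := ih _ (h ▸ hvd) (hv i (by simp)) rfl
  obtain ⟨hvj, hvj'⟩ := ih _ (h ▸ hvd) (hv j (by simp)) rfl
  rw [map_mul, Module.End.mul_apply, hdα, map_add, map_smul, map_smul]
  refine ⟨add_nonneg (smul_nonneg ha hvi) (smul_nonneg hb hvj), ?_⟩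
  simp only [Pi.add_apply, Pi.smul_apply, smul_eq_mul, Finset.sum_add_distrib, ← Finset.mul_sum]
  nlinarith

theorem nonpos_of_isRightDescent (hM : ∀ i j, i ≠ j → M i j = 3) {w : W} {i : B}
    (hwi : cs.IsRightDescent w i) : ρ w (Pi.single i 1) ≤ 0 := by
  rw [cs.isRightDescent_iff_not_isRightDescent_mul] at hwi
  have hpos := (hρ.nonneg_and_one_le_sum_of_not_isRightDescent hM hwi).1
  rw [map_mul, Module.End.mul_apply, (hρ i).1, map_neg] at hpos
  exact neg_nonneg.mp hpos

theorem apply_apply_eq_of_mem_closure {I : Set B} {i₀ : B} (hi₀ : i₀ ∉ I) {w : W}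
    (hw : w ∈ Subgroup.closure (cs.simple '' I)) (v : B → ℝ) : ρ w v i₀ = v i₀ := by
  induction hw using Subgroup.closure_induction generalizing v with
  | mem _ hx =>
    obtain ⟨x, hxI, rfl⟩ := hx
    exact hρ.simple_apply_of_ne x v (ne_of_mem_of_not_mem hxI hi₀).symm
  | one => simp
  | mul _ _ _ _ h₁ h₂ => rw [map_mul, Module.End.mul_apply, h₁, h₂]
  | inv x _ h => rw [← h (ρ x⁻¹ v), ← Module.End.mul_apply, ← map_mul, mul_inv_cancel, map_one,
      Module.End.one_apply]

theorem not_isLeftDescent_of_mem_closure (hM : ∀ i j, i ≠ j → M i j = 3) {I : Set B} {i₀ : B}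
    (hi₀ : i₀ ∉ I) {w : W} (hw : w ∈ Subgroup.closure (cs.simple '' I)) :
    ¬ cs.IsLeftDescent w i₀ := by
  intro h
  rw [← cs.isRightDescent_inv_iff] at h
  have hcoord := hρ.nonpos_of_isRightDescent hM h i₀
  rw [hρ.apply_apply_eq_of_mem_closure hi₀ (inv_mem hw)] at hcoord
  norm_num at hcoord

theorem coxeterForm_apply_le_neg_one (hM : ∀ i j, i ≠ j → M i j = 3) {I : Set B} {i₀ x : B}
    (hi₀ : i₀ ∉ I) (hx : x ≠ i₀) {u : W} (hu : u ∈ Subgroup.closure (cs.simple '' I))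
    (hux : ¬ cs.IsLeftDescent u x) :
    coxeterForm (ρ u (Pi.single i₀ 1)) (Pi.single x 1) ≤ -1 := by
  have hβ : ρ u (ρ u⁻¹ (Pi.single x 1)) = Pi.single x 1 := by
    rw [← Module.End.mul_apply, ← map_mul, mul_inv_cancel, map_one, Module.End.one_apply]
  have hβi₀ : ρ u⁻¹ (Pi.single x 1) i₀ = 0 := by
    rw [hρ.apply_apply_eq_of_mem_closure hi₀ (inv_mem hu), Pi.single_apply, if_neg hx.symm]
  rw [← cs.isRightDescent_inv_iff] at hux
  have hβsum := (hρ.nonneg_and_one_le_sum_of_not_isRightDescent hM hux).2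
  rw [← hβ, hρ.coxeterForm_map, coxeterForm_comm, coxeterForm_single_right, hβi₀]
  linarith

theorem length_add_one_le_sum_apply (hM : ∀ i j, i ≠ j → M i j = 3) {i₀ : B} {w : W}
    (hw : w ∈ Subgroup.closure (cs.simple '' {i₀}ᶜ)) :
    (cs.length w : ℝ) + 1 ≤ ∑ k, ρ w (Pi.single i₀ 1) k := by
  induction h : cs.length w using Nat.strong_induction_on generalizing w with
  | _ n ih =>
  by_cases hw1 : w = 1
  · simp [← h, hw1]
  obtain ⟨x, hwx⟩ := cs.exists_leftDescent_of_ne_one hw1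
  have hx : x ≠ i₀ := by
    rintro rfl
    exact hρ.not_isLeftDescent_of_mem_closure hM (by simp) hw hwx
  obtain ⟨u, rfl⟩ : ∃ u, w = cs.simple x * u :=
    ⟨cs.simple x * w, (cs.simple_mul_simple_cancel_left x).symm⟩
  have hsx : cs.simple x ∈ Subgroup.closure (cs.simple '' {i₀}ᶜ) :=
    Subgroup.subset_closure ⟨x, hx, rfl⟩
  have hu : u ∈ Subgroup.closure (cs.simple '' {i₀}ᶜ) := by
    simpa [cs.simple_mul_simple_cancel_left] using mul_mem hsx hw
  rw [cs.isLeftDescent_iff, cs.simple_mul_simple_cancel_left] at hwx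
  have hux : ¬ cs.IsLeftDescent u x := by
    rw [cs.not_isLeftDescent_iff]
    omega
  have ihu := ih _ (by omega) hu rfl
  have hform := hρ.coxeterForm_apply_le_neg_one hM (by simp) hx hu hux
  rw [map_mul, Module.End.mul_apply, hρ.sum_simple_apply, ← h, ← hwx]
  push_cast
  linarith

end IsCompleteGeometricRep

end GeometricRep

theorem height_ge_length_add_one_general (l : ℕ)
    (M : CoxeterMatrix (Fin l))
    (hM : ∀ i j : Fin l, M.M i j = if i = j then 1 else 3)
    (W : Type*) [Group W] (cs : CoxeterSystem M W)
    (ρ : W →* Module.End ℝ (Fin l → ℝ))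
    (hρ : ∀ i : Fin l,
      (ρ (cs.simple i)) (Pi.single i (1 : ℝ)) = -Pi.single i 1 ∧
      ∀ j : Fin l, j ≠ i →
        (ρ (cs.simple i)) (Pi.single j (1 : ℝ)) = Pi.single i 1 + Pi.single j 1)
    (i0 : Fin l)
    (w : W) (hw : w ∈ Subgroup.closure {x : W | ∃ i : Fin l, i ≠ i0 ∧ x = cs.simple i}) :
    (cs.length w : ℝ) + 1 ≤ ∑ k : Fin l, coeffc ρ i0 w k := by
  have hW' : {x : W | ∃ i : Fin l, i ≠ i0 ∧ x = cs.simple i} = cs.simple '' {i0}ᶜ := by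
    ext x
    simp [eq_comm]
  rw [hW'] at hw
  exact IsCompleteGeometricRep.length_add_one_le_sum_apply hρ
    (fun i j hij => by simp [hM, hij]) hw

theorem height_ge_length_add_one (l : ℕ) (hl : 2 ≤ l)
    (M : CoxeterMatrix (Fin l))
    (hM : ∀ i j : Fin l, M.M i j = if i = j then 1 else 3)
    (W : Type*) [Group W] (cs : CoxeterSystem M W)
    (ρ : W →* Module.End ℝ (Fin l → ℝ))
    (hρ : ∀ i : Fin l,
      (ρ (cs.simple i)) (Pi.single i (1 : ℝ)) = -Pi.single i 1 ∧
      ∀ j : Fin l, j ≠ i →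
        (ρ (cs.simple i)) (Pi.single j (1 : ℝ)) = Pi.single i 1 + Pi.single j 1)
    (i0 : Fin l) (hi0 : (i0 : ℕ) = 0)
    (w : W) (hw : w ∈ Subgroup.closure {x : W | ∃ i : Fin l, i ≠ i0 ∧ x = cs.simple i}) :
    (cs.length w : ℝ) + 1 ≤ ∑ k : Fin l, coeffc ρ i0 w k :=
  height_ge_length_add_one_general l M hM W cs ρ hρ i0 w hw
end
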